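/- For a nonempty index 𝐤=(k₁,…,k_r), the following identity holds in ℛ: Σ_{m=0}^{r−1} (−1)^m Σ_{(l₁,…,l_{r−m}) ∈ S_m(𝐤)} Σ_{i=1}^{r−m} (l_i, l_{i+1},…,l_{r−m}, l₁,…,l_{i−1}, 1)⋆ = Σ_{i=1}^{r} [ (k_{i+1},…,k_r, k₁,…,k_i, 1) + (k_{i+1},…,k_r, k₁,…,k_{i−1}, k_i+1) ]. -/

import Mathlib

/-!
Splitting off the first separator gives `(a, b, 𝐥)⋆ = a·(b, 𝐥)⋆ + (a + b, 𝐥)⋆`. With it, the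
alternating sum, over the linear comma/plus patterns `t` of an index `𝐰`, of `(𝐰_t, 1)⋆`
(`𝐰_t` the merged index) telescopes to `(𝐰, 1) + (𝐰 with its last entry increased by 1)`:
the terms with a plus sign in the first slot cancel the second summand of the recursion.

On the left-hand side, the rotations of the cyclically merged index of a cyclic pattern `s` are
exactly its linear readings starting right after each comma of `s`. Grouping the terms by the
position `d` of that comma, the cyclic patterns with a comma at `d` are the linear patterns of the
rotation `(k_{d+1}, …, k_r, k₁, …, k_d)` (the comma at `d` becoming the ignored last separator),
so each group is one such alternating sum and yields the `d`-th summand of the right-hand side.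
-/

/-- `ℛ`, the free `ℚ`-vector space on the set of indices (realized as lists of naturals;
indices are the lists all of whose entries are positive). -/
abbrev RSp : Type := List ℕ →₀ ℚ

/-- Merge an interleaved sequence `a □ b₁ □ b₂ ⋯`: a `true` separator is a plus sign
(the adjacent entries are added together), a `false` separator is a comma. -/
def mergeP : ℕ → List (Bool × ℕ) → List ℕ
  | a, [] => [a]
  | a, (true, b) :: rest => mergeP (a + b) rest
  | a, (false, b) :: rest => a :: mergeP b rest

/-- `𝐤⋆ ∈ ℛ`: the sum over all `2^{r−1}` comma/plus patterns of the merged index. -/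
noncomputable def starIdx : List ℕ → RSp
  | [] => 0
  | a :: rest =>
      ∑ s : Fin rest.length → Bool,
        Finsupp.single (mergeP a ((List.ofFn s).zip rest)) (1 : ℚ)

/-- The sum, over all comma/plus patterns of `𝐤` with exactly `m` plus signs,
of `(merged index)⋆ ∈ ℛ`. -/
noncomputable def starIdxM : List ℕ → ℕ → RSp
  | [], _ => 0
  | a :: rest, m =>
      ∑ s : Fin rest.length → Bool,
        if (List.ofFn s).count true = m then starIdx (mergeP a ((List.ofFn s).zip rest)) else 0

/-- The sum, over all comma/plus patterns of `𝐤` with exactly `m` plus signs,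
of the merged index, as an element of `ℛ`. -/
noncomputable def mergeM : List ℕ → ℕ → RSp
  | [], _ => 0
  | a :: rest, m =>
      ∑ s : Fin rest.length → Bool,
        if (List.ofFn s).count true = m then
          Finsupp.single (mergeP a ((List.ofFn s).zip rest)) (1 : ℚ) else 0

/-- Given a cyclic comma/plus pattern `s` on `𝐤` (`s[i]` sits between the `i`-th and the
`(i+1)`-st entry, cyclically) having at least one comma, merge the cyclically adjacent
entries joined by plus signs, reading the cycle linearly starting right after the first
comma (this fixes a choice of cyclic rotation of the merged index). -/
def cycMerge (K : List ℕ) (s : List Bool) : List ℕ :=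
  match K.rotate (s.idxOf false + 1) with
  | [] => []
  | a :: rest => mergeP a ((s.rotate (s.idxOf false + 1)).zip rest)

/-- `S_m(𝐤) ∈ ℛ`: the sum, over all cyclic comma/plus patterns of `𝐤` with exactly `m`
plus signs, of (a chosen cyclic rotation of) the cyclically merged index. -/
noncomputable def SmDef (K : List ℕ) (m : ℕ) : RSp :=
  ∑ s : Fin K.length → Bool,
    if (List.ofFn s).count true = m then
      Finsupp.single (cycMerge K (List.ofFn s)) (1 : ℚ) else 0

/-- For `M = Σ_𝐤 c_𝐤·𝐤 ∈ ℛ`, the weighted sum `Σ_{𝐤 ∈ M} f(𝐤) := Σ_𝐤 c_𝐤 • f(𝐤)`;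
here used with `M = S_m(𝐤)`, giving the notation `Σ_{(l₁,…,l_{r−m}) ∈ S_m(𝐤)} f(l)`. -/
noncomputable def Ssum (K : List ℕ) (m : ℕ) (f : List ℕ → RSp) : RSp :=
  Finsupp.sum (SmDef K m) fun l c => c • f l

open Finset

lemma sum_ofFn_succ {α M : Type*} [Fintype α] [AddCommMonoid M] {n : ℕ} (F : List α → M) :
    ∑ s : Fin (n + 1) → α, F (List.ofFn s) = ∑ x, ∑ t : Fin n → α, F (x :: List.ofFn t) := by
  rw [← (Fin.consEquiv fun _ => α).sum_comp, Fintype.sum_prod_type]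
  exact sum_congr rfl fun x _ => sum_congr rfl fun t _ => congrArg F (List.ofFn_cons x t)

lemma sum_ofFn_succ' {α M : Type*} [Fintype α] [AddCommMonoid M] {n : ℕ} (F : List α → M) :
    ∑ s : Fin (n + 1) → α, F (List.ofFn s) = ∑ x, ∑ t : Fin n → α, F (List.ofFn t ++ [x]) := by
  rw [← (Fin.snocEquiv fun _ => α).sum_comp, Fintype.sum_prod_type]
  refine sum_congr rfl fun x _ => sum_congr rfl fun t _ => congrArg F ?_
  simp only [Fin.snocEquiv_apply, List.ofFn_succ', Fin.snoc_castSucc, Fin.snoc_last,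
    List.concat_eq_append]

lemma sum_ofFn_rotate {α M : Type*} [Fintype α] [AddCommMonoid M] {n : ℕ} (F : List α → M)
    (k : ℕ) : ∑ s : Fin n → α, F ((List.ofFn s).rotate k) = ∑ s : Fin n → α, F (List.ofFn s) := by
  have rotate_one (G : List α → M) :
      ∑ s : Fin n → α, G ((List.ofFn s).rotate 1) = ∑ s : Fin n → α, G (List.ofFn s) := by
    cases n with
    | zero => simp
    | succ n =>
      rw [sum_ofFn_succ (fun l => G (l.rotate 1)), sum_ofFn_succ' G]
      simp only [List.rotate_cons_succ, List.rotate_zero]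
  induction k generalizing F with
  | zero => simp
  | succ k ih =>
    simpa only [List.rotate_rotate] using (ih fun l => F (l.rotate 1)).trans (rotate_one F)

lemma List.rotate_add_length {α : Type*} (l : List α) (n : ℕ) :
    l.rotate (n + l.length) = l.rotate n := by
  rw [← List.rotate_mod, Nat.add_mod_right, List.rotate_mod]

lemma List.getLast?_rotate_succ {α : Type*} (l : List α) {k : ℕ} (hk : k < l.length) :
    (l.rotate (k + 1)).getLast? = l[k]? := by
  rw [List.rotate_eq_drop_append_take hk, List.getLast?_append, List.getLast?_take]
  simp [List.getElem?_eq_getElem hk]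

lemma sum_range_add_of_periodic {M : Type*} [AddCommMonoid M] {f : ℕ → M} {r : ℕ}
    (hf : Function.Periodic f r) (a : ℕ) : ∑ i ∈ range r, f (i + a) = ∑ i ∈ range r, f i := by
  induction a with
  | zero => rfl
  | succ a ih =>
    rw [← ih]
    cases r with
    | zero => rfl
    | succ r =>
      rw [sum_range_succ (fun i => f (i + (a + 1))), sum_range_succ' (fun i => f (i + a))]
      have hwrap : f (r + (a + 1)) = f (0 + a) := by
        rw [zero_add, ← hf a]
        ring_nf
      exact congrArg₂ (· + ·) (sum_congr rfl fun i _ => congrArg f (by omega)) hwrap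

lemma sum_range_count_false_take {M : Type*} [AddCommMonoid M] (h : ℕ → M) (p : List Bool) :
    ∑ k ∈ range p.length,
        (if p[k]? = some false then h ((p.take (k + 1)).count false) else 0) =
      ∑ i ∈ range (p.count false), h (i + 1) := by
  induction p using List.reverseRecOn with
  | nil => rfl
  | append_singleton q x ih =>
    have hprefix : ∀ k ∈ range q.length,
        (if (q ++ [x])[k]? = some false then h (((q ++ [x]).take (k + 1)).count false) else 0) =
          if q[k]? = some false then h ((q.take (k + 1)).count false) else 0 := by
      intro k hk
      have hk : k < q.length := mem_range.mp hk
      rw [List.getElem?_append_left hk, List.take_append_of_le_length hk]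
    rw [List.length_append, List.length_singleton, sum_range_succ, sum_congr rfl hprefix, ih,
      List.getElem?_concat_length, List.take_of_length_le (by simp), List.count_append]
    cases x <;> simp [sum_range_succ]

lemma mergeP_ne_nil : ∀ (L : List (Bool × ℕ)) (a : ℕ), mergeP a L ≠ []
  | [], _ => List.cons_ne_nil _ _
  | (true, b) :: L, a => mergeP_ne_nil L (a + b)
  | (false, _) :: _, _ => List.cons_ne_nil _ _

lemma mergeP_add : ∀ (L : List (Bool × ℕ)) (a b : ℕ),
    mergeP (a + b) L = (mergeP b L).modifyHead (a + ·)
  | [], _, _ => rfl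
  | (true, c) :: L, a, b => by simp only [mergeP, Nat.add_assoc, mergeP_add L a (b + c)]
  | (false, _) :: _, _, _ => rfl

lemma mergeP_append_false : ∀ (X : List (Bool × ℕ)) (a b : ℕ) (Y : List (Bool × ℕ)),
    mergeP a (X ++ (false, b) :: Y) = mergeP a X ++ mergeP b Y
  | [], _, _, _ => rfl
  | (true, c) :: X, a, b, Y => mergeP_append_false X (a + c) b Y
  | (false, c) :: X, a, b, Y => by
      simp only [List.cons_append, mergeP, mergeP_append_false X c b Y]

lemma length_mergeP_zip : ∀ (p : List Bool) (l : List ℕ) (a : ℕ), p.length = l.length →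
    (mergeP a (p.zip l)).length = p.count false + 1
  | [], [], _, _ => rfl
  | true :: p, b :: l, a, h => by
      simpa [mergeP] using length_mergeP_zip p l (a + b) (by simpa using h)
  | false :: p, b :: l, a, h => by
      simpa [mergeP] using length_mergeP_zip p l b (by simpa using h)

lemma starIdx_singleton (a : ℕ) : starIdx [a] = Finsupp.single [a] 1 := by
  simp [starIdx, mergeP]

lemma starIdx_cons_cons (a b : ℕ) (l : List ℕ) :
    starIdx (a :: b :: l) =
      Finsupp.mapDomain (List.cons a) (starIdx (b :: l)) + starIdx ((a + b) :: l) := by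
  refine (sum_ofFn_succ fun p => Finsupp.single (mergeP a (p.zip (b :: l))) 1).trans ?_
  simp only [Fintype.sum_bool, List.zip_cons_cons, mergeP, starIdx,
    Finsupp.mapDomain_finsetSum, Finsupp.mapDomain_single, add_comm]

/-- The merged index of the linear comma/plus pattern `p` on `w`, where `p[i]` sits between
`w[i]` and `w[i+1]`; entries of `p` beyond the last gap of `w` are ignored. -/
def linMerge : List ℕ → List Bool → List ℕ
  | [], _ => []
  | a :: l, p => mergeP a (p.zip l)

lemma linMerge_ne_nil {w : List ℕ} (hw : w ≠ []) (p : List Bool) : linMerge w p ≠ [] := by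
  obtain ⟨a, l, rfl⟩ := List.exists_cons_of_ne_nil hw
  exact mergeP_ne_nil _ _

lemma linMerge_concat {w : List ℕ} {p : List Bool} (h : p.length + 1 = w.length) (x : Bool) :
    linMerge w (p ++ [x]) = linMerge w p := by
  obtain ⟨a, l, rfl⟩ := List.exists_cons_of_ne_nil (List.ne_nil_of_length_pos (by omega) : w ≠ [])
  simp only [linMerge]
  rw [← List.append_nil l, List.zip_append (by simpa using h)]
  simp

lemma linMerge_append {w₁ : List ℕ} {p₁ : List Bool} (hlen : p₁.length = w₁.length)
    (hp₁ : p₁.getLastD false = false) (w₂ : List ℕ) (p₂ : List Bool) :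
    linMerge (w₁ ++ w₂) (p₁ ++ p₂) = linMerge w₁ p₁ ++ linMerge w₂ p₂ := by
  induction p₁ using List.reverseRecOn with
  | nil =>
    obtain rfl := List.length_eq_zero_iff.mp hlen.symm
    rfl
  | append_singleton q x _ =>
    obtain rfl : x = false := by simpa using hp₁
    obtain ⟨a, l, rfl⟩ := List.exists_cons_of_ne_nil
      (List.ne_nil_of_length_pos (by simp at hlen; omega) : w₁ ≠ [])
    have hq : q.length = l.length := by simpa using hlen
    rw [linMerge_concat (by simpa using hlen)]
    cases w₂ with
    | nil =>
      simp only [List.append_nil, List.append_assoc, List.singleton_append, linMerge]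
      conv_lhs => rw [← List.append_nil l, List.zip_append hq]
      simp
    | cons b l₂ =>
      simp only [List.append_assoc, List.cons_append, List.nil_append, linMerge, List.zip_append hq,
        List.zip_cons_cons, mergeP_append_false]

lemma linMerge_add_head (a b : ℕ) (l : List ℕ) (p : List Bool) :
    linMerge ((a + b) :: l) p = (linMerge (b :: l) p).modifyHead (a + ·) :=
  mergeP_add _ a b

lemma starIdx_cons_linMerge_append (a b : ℕ) (l : List ℕ) (p : List Bool) (x : ℕ) :
    starIdx (a :: (linMerge (b :: l) p ++ [x])) =
      Finsupp.mapDomain (List.cons a) (starIdx (linMerge (b :: l) p ++ [x])) +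
        starIdx (linMerge ((a + b) :: l) p ++ [x]) := by
  obtain ⟨c, M, hM⟩ := List.exists_cons_of_ne_nil (linMerge_ne_nil (List.cons_ne_nil b l) p)
  rw [linMerge_add_head, hM]
  exact starIdx_cons_cons a c (M ++ [x])

lemma sum_alternating_starIdx_linMerge : ∀ (n : ℕ) (w : List ℕ), w.length = n + 1 →
    ∑ t : Fin n → Bool, (-1 : ℚ) ^ (List.ofFn t).count true •
        starIdx (linMerge w (List.ofFn t) ++ [1]) =
      Finsupp.single (w ++ [1]) 1 + Finsupp.single (w.modifyLast (· + 1)) 1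
  | 0, w, hw => by
    obtain ⟨a, rfl⟩ := List.length_eq_one_iff.mp hw
    have hlast : [a].modifyLast (· + 1) = [a + 1] := List.modifyLast_concat _ a []
    rw [Fintype.sum_unique, List.ofFn_zero, hlast, List.count_nil, pow_zero, one_smul,
      show linMerge [a] [] ++ [1] = [a, 1] from rfl, starIdx_cons_cons, starIdx_singleton,
      starIdx_singleton, Finsupp.mapDomain_single]
    rfl
  | n + 1, w, hw => by
    obtain ⟨a, b, l, rfl⟩ : ∃ a b l, w = a :: b :: l := by
      match w with
      | a :: b :: l => exact ⟨a, b, l, rfl⟩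
    have hl : l.length = n := by simpa using hw
    let T (v : List ℕ) (p : List Bool) : RSp :=
      (-1 : ℚ) ^ p.count true • starIdx (linMerge v p ++ [1])
    have htrue (p : List Bool) : T (a :: b :: l) (true :: p) = -T ((a + b) :: l) p := by
      simp only [T, List.count_cons_self, pow_succ, mul_neg_one, neg_smul]
      rfl
    have hfalse (p : List Bool) : T (a :: b :: l) (false :: p) =
        Finsupp.mapDomain (List.cons a) (T (b :: l) p) + T ((a + b) :: l) p := by
      simp only [T, List.count_cons, Bool.false_eq_true, beq_iff_eq, if_false, add_zero]
      rw [show linMerge (a :: b :: l) (false :: p) ++ [1] = a :: (linMerge (b :: l) p ++ [1])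
        from rfl, starIdx_cons_linMerge_append, smul_add, Finsupp.mapDomain_smul]
    have hcons : (a :: b :: l).modifyLast (· + 1) = a :: (b :: l).modifyLast (· + 1) :=
      List.modifyLast_append_of_right_ne_nil _ [a] (b :: l) (List.cons_ne_nil b l)
    calc ∑ t : Fin (n + 1) → Bool, T (a :: b :: l) (List.ofFn t)
        = ∑ t : Fin n → Bool, (T (a :: b :: l) (true :: List.ofFn t) +
            T (a :: b :: l) (false :: List.ofFn t)) := by
          rw [sum_ofFn_succ, Fintype.sum_bool, sum_add_distrib]
      _ = Finsupp.mapDomain (List.cons a) (∑ t : Fin n → Bool, T (b :: l) (List.ofFn t)) := by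
          simp only [htrue, hfalse, Finsupp.mapDomain_finsetSum]
          exact sum_congr rfl fun _ _ => by abel
      _ = _ := by
          rw [sum_alternating_starIdx_linMerge n (b :: l) (by simpa using hl),
            Finsupp.mapDomain_add, Finsupp.mapDomain_single, Finsupp.mapDomain_single, hcons]
          rfl

lemma length_linMerge {w : List ℕ} {p : List Bool} (hlen : p.length = w.length)
    (hp : p.getLastD false = false) : (linMerge w p).length = p.count false := by
  rcases p.eq_nil_or_concat' with rfl | ⟨q, x, rfl⟩
  · obtain rfl := List.length_eq_zero_iff.mp hlen.symm
    rfl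
  obtain rfl : x = false := by simpa using hp
  obtain ⟨a, l, rfl⟩ := List.exists_cons_of_ne_nil
    (List.ne_nil_of_length_pos (by simp at hlen; omega) : w ≠ [])
  rw [linMerge_concat (by simpa using hlen), linMerge,
    length_mergeP_zip q l a (by simpa using hlen), List.count_append]
  rfl

lemma linMerge_rotate {w : List ℕ} {p : List Bool} (hlen : p.length = w.length)
    (hp : p.getLastD false = false) {k : ℕ} (hk : k ≤ p.length)
    (hpk : (p.take k).getLastD false = false) :
    linMerge (w.rotate k) (p.rotate k) = (linMerge w p).rotate ((p.take k).count false) := by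
  have hdrop : (p.drop k).getLastD false = false := by
    rw [List.getLastD_eq_getLast?, List.getLast?_drop]
    split_ifs
    · rfl
    · rwa [← List.getLastD_eq_getLast?]
  have ht : (p.take k).length = (w.take k).length := by simp [hlen]
  have hd : (p.drop k).length = (w.drop k).length := by simp [hlen]
  rw [List.rotate_eq_drop_append_take hk, List.rotate_eq_drop_append_take (hlen ▸ hk),
    linMerge_append hd hdrop, ← length_linMerge ht hpk]
  have hsplit :
      linMerge w p = linMerge (w.take k) (p.take k) ++ linMerge (w.drop k) (p.drop k) := by
    conv_lhs => rw [← List.take_append_drop k w, ← List.take_append_drop k p]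
    exact linMerge_append ht hpk _ _
  rw [hsplit, List.rotate_append_length_eq]

lemma sum_linMerge_rotate {M : Type*} [AddCommMonoid M] (g : List ℕ → M) {w : List ℕ}
    {p : List Bool} (hlen : p.length = w.length) (hp : p.getLast? = some false) :
    ∑ k ∈ range p.length, (if (p.rotate (k + 1)).getLast? = some false then
        g (linMerge (w.rotate (k + 1)) (p.rotate (k + 1))) else 0) =
      ∑ i ∈ range (p.count false), g ((linMerge w p).rotate i) := by
  have hp' : p.getLastD false = false := by simp [List.getLastD_eq_getLast?, hp]
  have hL : (linMerge w p).length = p.count false := length_linMerge hlen hp'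
  calc _ = ∑ k ∈ range p.length, (if p[k]? = some false then
          g ((linMerge w p).rotate ((p.take (k + 1)).count false)) else 0) := by
        refine sum_congr rfl fun k hk => ?_
        have hk : k < p.length := mem_range.mp hk
        rw [List.getLast?_rotate_succ p hk]
        split_ifs with h
        · have hpk : (p.take (k + 1)).getLastD false = false := by
            simp [List.getLastD_eq_getLast?, List.getLast?_take, h]
          rw [linMerge_rotate hlen hp' hk hpk]
        · rfl
    _ = ∑ i ∈ range (p.count false), g ((linMerge w p).rotate (i + 1)) :=
        sum_range_count_false_take (fun i => g ((linMerge w p).rotate i)) p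
    _ = _ := by
        rw [← hL]
        exact sum_range_add_of_periodic (f := fun i => g ((linMerge w p).rotate i))
          (fun i => by simp only [List.rotate_add_length]) 1

lemma cycMerge_eq_linMerge (K : List ℕ) (S : List Bool) :
    cycMerge K S = linMerge (K.rotate (S.idxOf false + 1)) (S.rotate (S.idxOf false + 1)) := by
  unfold cycMerge
  split <;> simp_all [linMerge]

lemma sum_rotate_cycMerge {M : Type*} [AddCommMonoid M] (g : List ℕ → M) {K : List ℕ}
    {S : List Bool} (hlen : S.length = K.length) :
    ∑ i ∈ range (S.count false), g ((cycMerge K S).rotate i) =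
      ∑ d ∈ range K.length, (if (S.rotate (d + 1)).getLast? = some false then
        g (linMerge (K.rotate (d + 1)) (S.rotate (d + 1))) else 0) := by
  by_cases hf : false ∉ S
  · rw [List.count_eq_zero.mpr hf, sum_range_zero]
    exact (sum_eq_zero fun d _ =>
      if_neg fun h => hf (List.mem_rotate.mp (List.mem_of_getLast? h))).symm
  have hi := List.idxOf_lt_length_iff.mpr (not_not.mp hf)
  have he : (S.rotate (S.idxOf false + 1)).getLast? = some false := by
    rw [List.getLast?_rotate_succ S hi, List.getElem?_eq_getElem hi, List.getElem_idxOf]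
  let φ (d : ℕ) : M := if (S.rotate d).getLast? = some false then
    g (linMerge (K.rotate d) (S.rotate d)) else 0
  have hφ : Function.Periodic φ K.length := fun d => by
    have hK : K.rotate (d + K.length) = K.rotate d := K.rotate_add_length d
    have hS : S.rotate (d + K.length) = S.rotate d := hlen ▸ S.rotate_add_length d
    simp only [φ, hK, hS]
  rw [cycMerge_eq_linMerge, ← (List.rotate_perm S _).count_eq,
    ← sum_linMerge_rotate g (by simpa using hlen) he, List.length_rotate, hlen]
  refine (sum_congr rfl fun k _ => ?_).trans
    (sum_range_add_of_periodic (hφ.add_const 1) (S.idxOf false + 1))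
  simp only [List.rotate_rotate]
  rw [show S.idxOf false + 1 + (k + 1) = k + (S.idxOf false + 1) + 1 by omega]

lemma sum_alternating_starIdx_linMerge_rotate (n : ℕ) {w : List ℕ} (hw : w.length = n + 1) (k : ℕ) :
    ∑ s : Fin (n + 1) → Bool, (-1 : ℚ) ^ (List.ofFn s).count true •
        (if ((List.ofFn s).rotate k).getLast? = some false then
          starIdx (linMerge w ((List.ofFn s).rotate k) ++ [1]) else 0) =
      Finsupp.single (w ++ [1]) 1 + Finsupp.single (w.modifyLast (· + 1)) 1 := by
  let G (p : List Bool) : RSp := (-1 : ℚ) ^ p.count true •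
    if p.getLast? = some false then starIdx (linMerge w p ++ [1]) else 0
  have hG (s : Fin (n + 1) → Bool) : G ((List.ofFn s).rotate k) =
      (-1 : ℚ) ^ (List.ofFn s).count true •
        (if ((List.ofFn s).rotate k).getLast? = some false then
          starIdx (linMerge w ((List.ofFn s).rotate k) ++ [1]) else 0) := by
    simp only [G, (List.rotate_perm _ k).count_eq]
  have htrue (t : Fin n → Bool) : G (List.ofFn t ++ [true]) = 0 := by simp [G]
  have hfalse (t : Fin n → Bool) : G (List.ofFn t ++ [false]) =
      (-1 : ℚ) ^ (List.ofFn t).count true • starIdx (linMerge w (List.ofFn t) ++ [1]) := by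
    simp [G, linMerge_concat (by simp [hw] : (List.ofFn t).length + 1 = w.length)]
  simp only [← hG, sum_ofFn_rotate G k, sum_ofFn_succ' G, Fintype.sum_bool, htrue, hfalse,
    sum_const_zero, zero_add]
  exact sum_alternating_starIdx_linMerge n w hw

lemma Ssum_eq_sum (K : List ℕ) (m : ℕ) (f : List ℕ → RSp) :
    Ssum K m f = ∑ s : Fin K.length → Bool,
      if (List.ofFn s).count true = m then f (cycMerge K (List.ofFn s)) else 0 := by
  rw [Ssum, ← Finsupp.linearCombination_apply, SmDef, map_sum]
  simp only [apply_ite (Finsupp.linearCombination ℚ f), Finsupp.linearCombination_single,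
    one_smul, map_zero]

lemma sum_signed_Ssum (K : List ℕ) (g : List ℕ → RSp) :
    ∑ m ∈ range K.length, (-1 : ℚ) ^ m •
        Ssum K m (fun l => ∑ i ∈ range (K.length - m), g (l.rotate i)) =
      ∑ s : Fin K.length → Bool, (-1 : ℚ) ^ (List.ofFn s).count true •
        ∑ i ∈ range ((List.ofFn s).count false), g ((cycMerge K (List.ofFn s)).rotate i) := by
  simp only [Ssum_eq_sum, smul_sum, smul_ite, smul_zero]
  rw [sum_comm]
  refine sum_congr rfl fun s _ => ?_
  have hcount := List.count_true_add_count_false (List.ofFn s)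
  rw [List.length_ofFn] at hcount
  rw [sum_ite_eq]
  split_ifs with h
  · rw [show K.length - (List.ofFn s).count true = (List.ofFn s).count false by omega]
  · simp [show (List.ofFn s).count false = 0 by simp at h; omega]

theorem prop3_cyclic_general (K : List ℕ) (hne : K ≠ []) :
    (∑ m ∈ Finset.range K.length, (-1 : ℚ) ^ m •
        Ssum K m fun l => ∑ i ∈ Finset.range (K.length - m),
          starIdx (l.rotate i ++ [1]))
      = ∑ i ∈ Finset.range K.length,
          (Finsupp.single (K.rotate (i + 1) ++ [1]) (1 : ℚ)
            + Finsupp.single ((K.rotate i).tail ++ [(K.rotate i).headI + 1]) (1 : ℚ)) := by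
  obtain ⟨k, K', rfl⟩ := List.exists_cons_of_ne_nil hne
  refine (sum_signed_Ssum (k :: K') fun l => starIdx (l ++ [1])).trans ?_
  simp only [sum_rotate_cycMerge (fun l => starIdx (l ++ [1])) List.length_ofFn, smul_sum]
  rw [sum_comm]
  refine sum_congr rfl fun d _ => ?_
  refine (sum_alternating_starIdx_linMerge_rotate K'.length
    (w := (k :: K').rotate (d + 1)) (by simp) (d + 1)).trans ?_
  obtain ⟨h, t, hrot⟩ := List.exists_cons_of_ne_nil
    (mt List.rotate_eq_nil_iff.mp (List.cons_ne_nil k K') : (k :: K').rotate d ≠ [])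
  rw [← List.rotate_rotate, hrot, List.rotate_cons_succ, List.rotate_zero, List.modifyLast_concat]
  rfl

/-- **Proposition 6.6** of Hirose–Murahara–Ono: for a nonempty index `𝐤 = (k₁,…,k_r)`,
`Σ_{m=0}^{r−1} (−1)^m Σ_{(l₁,…,l_{r−m}) ∈ S_m(𝐤)} Σ_{i=1}^{r−m}
   (l_i, l_{i+1},…,l_{r−m}, l₁,…,l_{i−1}, 1)⋆
 = Σ_{i=1}^{r} [(k_{i+1},…,k_r, k₁,…,k_i, 1) + (k_{i+1},…,k_r, k₁,…,k_{i−1}, k_i+1)]`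
holds in `ℛ`. -/
theorem prop3_cyclic (K : List ℕ) (hne : K ≠ []) (hpos : ∀ x ∈ K, 0 < x) :
    (∑ m ∈ Finset.range K.length, (-1 : ℚ) ^ m •
        Ssum K m fun l => ∑ i ∈ Finset.range (K.length - m),
          starIdx (l.rotate i ++ [1]))
      = ∑ i ∈ Finset.range K.length,
          (Finsupp.single (K.rotate (i + 1) ++ [1]) (1 : ℚ)
            + Finsupp.single ((K.rotate i).tail ++ [(K.rotate i).headI + 1]) (1 : ℚ)) :=
  prop3_cyclic_general K hne
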